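/- Let A and B be real symmetric m×m matrices, and for p = 1,…,m let μ_p(A) and μ_p(B) denote their eigenvalues (counted with multiplicity) arranged in nonincreasing order. Then Σ_{p=1}^m (μ_p(A) − μ_p(B))² ≤ Σ_{i,j=1}^m (A_{ij} − B_{ij})²; that is, ‖diag λ↓(A) − diag λ↓(B)‖_F ≤ ‖A − B‖_F, the Frobenius-norm instance of Mirsky's eigenvalue perturbation inequality. -/

import Mathlib

/-!
Write `A = U diag(a) Uᵀ` and `B = V diag(b) Vᵀ` with `U`, `V` orthogonal, and `W = Uᵀ V`. Then
`∑ A i j * B i j = tr (A B) = ∑ p q, a p * W p q ^ 2 * b q`; for `B = A` this says that both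
sides of the inequality have the same sums of squares, so only the cross terms need comparing.
The matrix `(W p q ^ 2)` is doubly stochastic, hence by Birkhoff's theorem a convex combination of
permutation matrices, and against a permutation matrix the bilinear form is at most
`∑ μA p * μB p` by the rearrangement inequality, since `μA` and `μB` are sorted the same way.
-/

open Matrix Finset

theorem Monovary.dotProduct_mulVec_le {n R : Type*} [Fintype n] [DecidableEq n] [Field R]
    [LinearOrder R] [IsStrictOrderedRing R] {x y : n → R} (hxy : Monovary x y)
    {S : Matrix n n R} (hS : S ∈ doublyStochastic R n) : x ⬝ᵥ S *ᵥ y ≤ x ⬝ᵥ y := by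
  obtain ⟨w, hw_nonneg, hw_sum, rfl⟩ := exists_eq_sum_perm_of_mem_doublyStochastic hS
  calc x ⬝ᵥ (∑ σ, w σ • σ.permMatrix R) *ᵥ y
      = ∑ σ, w σ * ∑ i, x i * y (σ i) := by
        simp only [sum_mulVec, smul_mulVec, permMatrix_mulVec, dotProduct_sum, dotProduct_smul,
          smul_eq_mul]
        rfl
    _ ≤ ∑ σ, w σ * (x ⬝ᵥ y) := by
        gcongr with σ
        · exact hw_nonneg σ
        · exact hxy.sum_mul_comp_perm_le_sum_mul
    _ = x ⬝ᵥ y := by rw [← sum_mul, hw_sum, one_mul]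

namespace Matrix

variable {n : Type*} [Fintype n] [DecidableEq n]

theorem map_norm_sq_mem_doublyStochastic {𝕜 : Type*} [RCLike 𝕜] {U : Matrix n n 𝕜}
    (hU : U ∈ unitaryGroup n 𝕜) : U.map (‖·‖ ^ 2) ∈ doublyStochastic ℝ n := by
  refine mem_doublyStochastic_iff_sum.mpr ⟨fun i j => sq_nonneg ‖U i j‖, fun i => ?_, fun j => ?_⟩
  · have hrow := congr_fun₂ (mem_unitaryGroup_iff.mp hU) i i
    simp only [mul_apply, star_apply, RCLike.star_def, RCLike.mul_conj, one_apply_eq] at hrow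
    exact_mod_cast hrow
  · have hcol := congr_fun₂ (mem_unitaryGroup_iff'.mp hU) j j
    simp only [mul_apply, star_apply, RCLike.star_def, RCLike.conj_mul, one_apply_eq] at hcol
    exact_mod_cast hcol

namespace IsHermitian

theorem sum_sum_mul_eq_eigenvalues_dotProduct {A B : Matrix n n ℝ} (hA : A.IsHermitian)
    (hB : B.IsHermitian) :
    ∑ i, ∑ j, A i j * B i j = hA.eigenvalues ⬝ᵥ
      (star (hA.eigenvectorUnitary : Matrix n n ℝ) * hB.eigenvectorUnitary).map (‖·‖ ^ 2) *ᵥ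
        hB.eigenvalues := by
  set U : Matrix n n ℝ := (hA.eigenvectorUnitary : Matrix n n ℝ)
  set V : Matrix n n ℝ := (hB.eigenvectorUnitary : Matrix n n ℝ)
  set a := hA.eigenvalues
  set b := hB.eigenvalues
  have hA' : A = U * diagonal a * star U := by simpa using hA.spectral_theorem
  have hB' : B = V * diagonal b * star V := by simpa using hB.spectral_theorem
  have htrace : ∑ i, ∑ j, A i j * B i j = trace (A * B) := by
    simp only [trace, diag, mul_apply]
    exact sum_congr rfl fun i _ => sum_congr rfl fun j _ => by rw [← hB.apply i j, star_trivial]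
  have hcycle : trace (A * B) =
      trace (diagonal a * (star U * V) * diagonal b * star (star U * V)) := by
    rw [hA', hB']
    simp only [Matrix.mul_assoc]
    rw [trace_mul_comm U]
    simp only [star_mul, star_star, Matrix.mul_assoc]
  rw [htrace, hcycle]
  generalize star U * V = W
  simp only [trace, diag, mul_apply, diagonal_apply, ite_mul, mul_ite, zero_mul, mul_zero,
    sum_ite_eq, sum_ite_eq', mem_univ, if_true, star_apply, star_trivial, dotProduct, mulVec,
    map_apply, Real.norm_eq_abs, sq_abs, mul_sum]
  exact sum_congr rfl fun p _ => sum_congr rfl fun q _ => by ring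

theorem sum_sum_mul_self_eq_eigenvalues_dotProduct {A : Matrix n n ℝ} (hA : A.IsHermitian) :
    ∑ i, ∑ j, A i j * A i j = hA.eigenvalues ⬝ᵥ hA.eigenvalues := by
  rw [hA.sum_sum_mul_eq_eigenvalues_dotProduct hA, Unitary.coe_star_mul_self,
    Matrix.map_one (‖·‖ ^ 2) (by simp) (by simp), one_mulVec]

theorem sum_sum_mul_le_eigenvalues_dotProduct {A B : Matrix n n ℝ} (hA : A.IsHermitian)
    (hB : B.IsHermitian) {σ τ : Equiv.Perm n}
    (h : Monovary (hA.eigenvalues ∘ σ) (hB.eigenvalues ∘ τ)) :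
    ∑ i, ∑ j, A i j * B i j ≤ (hA.eigenvalues ∘ σ) ⬝ᵥ (hB.eigenvalues ∘ τ) := by
  set W := star hA.eigenvectorUnitary * hB.eigenvectorUnitary
  set S := (W : Matrix n n ℝ).map (‖·‖ ^ 2)
  calc ∑ i, ∑ j, A i j * B i j = hA.eigenvalues ⬝ᵥ S *ᵥ hB.eigenvalues :=
        hA.sum_sum_mul_eq_eigenvalues_dotProduct hB
    _ = (hA.eigenvalues ∘ σ) ⬝ᵥ S.submatrix σ τ *ᵥ (hB.eigenvalues ∘ τ) := by
        rw [submatrix_mulVec_equiv, comp_equiv_dotProduct_comp_equiv, Function.comp_assoc,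
          Equiv.self_comp_symm, Function.comp_id]
    _ ≤ _ := h.dotProduct_mulVec_le <|
        reindex_mem_doublyStochastic (e₁ := σ.symm) (e₂ := τ.symm)
          (map_norm_sq_mem_doublyStochastic W.2)

end IsHermitian

end Matrix

/-- **Mirsky's inequality, Frobenius-norm instance.** If `A` and `B` are real symmetric
`m × m` matrices and `μA`, `μB` are their eigenvalues (counted with multiplicity) arranged in
nonincreasing order, then `∑ p, (μA p - μB p)² ≤ ∑ i j, (A i j - B i j)²`. -/
theorem mirsky_frobenius {m : ℕ} (A B : Matrix (Fin m) (Fin m) ℝ)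
    (hA : A.IsHermitian) (hB : B.IsHermitian)
    (μA μB : Fin m → ℝ)
    (hμA : Antitone μA) (hμB : Antitone μB)
    (σA : Equiv.Perm (Fin m)) (hσA : μA = hA.eigenvalues ∘ σA)
    (σB : Equiv.Perm (Fin m)) (hσB : μB = hB.eigenvalues ∘ σB) :
    ∑ p, (μA p - μB p) ^ 2 ≤ ∑ i, ∑ j, (A i j - B i j) ^ 2 := by
  subst hσA hσB
  have hAA : ∑ i, ∑ j, A i j * A i j = (hA.eigenvalues ∘ σA) ⬝ᵥ (hA.eigenvalues ∘ σA) := by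
    rw [comp_equiv_dotProduct_comp_equiv, hA.sum_sum_mul_self_eq_eigenvalues_dotProduct]
  have hBB : ∑ i, ∑ j, B i j * B i j = (hB.eigenvalues ∘ σB) ⬝ᵥ (hB.eigenvalues ∘ σB) := by
    rw [comp_equiv_dotProduct_comp_equiv, hB.sum_sum_mul_self_eq_eigenvalues_dotProduct]
  have hAB := hA.sum_sum_mul_le_eigenvalues_dotProduct hB (hμA.monovary hμB)
  simp only [sub_sq', sum_add_distrib, sum_sub_distrib, mul_assoc, ← mul_sum]
  simp only [dotProduct, sq] at hAA hBB hAB ⊢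
  linarith
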